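/- arXiv:2508.03059 — 6 statements merged into one kernel-verified Lean document; each statement's English description precedes it below -/
import Mathlib

section
/- For every measurable w : Ω → (0,∞), the balancing loss satisfies l(w) = ∫ w^{-1} p dμ + ∫ w q dμ ≥ 2 ∫ √(p·q) dμ. Moreover, if p and q are μ-a.e. strictly positive, then equality holds if and only if w = √(p/q) μ-a.e.; in particular w* = √(p/q) is the (a.e.-unique) minimizer of the balancing loss. -/
/-!
Pointwise, `a + b - 2√(ab) = (√a - √b)²` with `a = w⁻¹ p` and `b = w q`, whose product `p q` does
not depend on `w`: so `w⁻¹ p + w q ≥ 2√(pq)`, with equality exactly when `w⁻¹ p = w q`, i.e.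
`w = √(p/q)`. Integrating gives the bound. Since `∫ √(pq) ≤ (∫ p + ∫ q) / 2 = 1` is finite, equality
of the integrals forces equality of the integrands almost everywhere.
-/

open MeasureTheory
open scoped ENNReal

theorem inv_mul_mul_mul_cancel₀ {G₀ : Type*} [CommGroupWithZero G₀] {a b c : G₀} (ha : a ≠ 0) :
    a⁻¹ * b * (a * c) = b * c := by
  rw [mul_mul_mul_comm, inv_mul_cancel₀ ha, one_mul]

namespace Real

theorem add_sub_two_mul_sqrt_mul {a b : ℝ} (ha : 0 ≤ a) (hb : 0 ≤ b) :
    a + b - 2 * √(a * b) = (√a - √b) ^ 2 := by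
  rw [sqrt_mul ha, sub_sq, sq_sqrt ha, sq_sqrt hb]
  ring

theorem two_mul_sqrt_mul_le_add {a b : ℝ} (ha : 0 ≤ a) (hb : 0 ≤ b) :
    2 * √(a * b) ≤ a + b :=
  sub_nonneg.mp (add_sub_two_mul_sqrt_mul ha hb ▸ sq_nonneg _)

theorem add_eq_two_mul_sqrt_mul_iff {a b : ℝ} (ha : 0 ≤ a) (hb : 0 ≤ b) :
    a + b = 2 * √(a * b) ↔ a = b := by
  rw [← sub_eq_zero, add_sub_two_mul_sqrt_mul ha hb, sq_eq_zero_iff, sub_eq_zero, sqrt_inj ha hb]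

variable {w p q : ℝ}

theorem two_mul_sqrt_mul_le_inv_mul_add_mul (hw : 0 < w) (hp : 0 ≤ p) (hq : 0 ≤ q) :
    2 * √(p * q) ≤ w⁻¹ * p + w * q := by
  simpa only [inv_mul_mul_mul_cancel₀ hw.ne'] using
    two_mul_sqrt_mul_le_add (by positivity : 0 ≤ w⁻¹ * p) (by positivity : 0 ≤ w * q)

theorem inv_mul_add_mul_eq_two_mul_sqrt_mul_iff (hw : 0 < w) (hp : 0 ≤ p) (hq : 0 < q) :
    w⁻¹ * p + w * q = 2 * √(p * q) ↔ w = √(p / q) := by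
  rw [← inv_mul_mul_mul_cancel₀ (b := p) (c := q) hw.ne',
    add_eq_two_mul_sqrt_mul_iff (by positivity) (by positivity), eq_comm (a := w),
    sqrt_eq_iff_mul_self_eq_of_pos hw, eq_div_iff hq.ne', inv_mul_eq_iff_eq_mul₀ hw.ne',
    mul_assoc, eq_comm]

theorem sqrt_div_mul_self (hq : 0 ≤ q) : √(p / q) * q = √(p * q) := by
  rcases hq.eq_or_lt with rfl | hq
  · simp
  rw [← sqrt_sq hq.le, ← sqrt_mul' _ (by positivity), sqrt_sq hq.le]
  congr 1
  field_simp

theorem inv_sqrt_div_mul_self (hp : 0 ≤ p) : (√(p / q))⁻¹ * p = √(p * q) := by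
  rw [← sqrt_inv, inv_div, sqrt_div_mul_self hp, mul_comm]

end Real

namespace ENNReal

theorem two_mul_ofReal_sqrt_mul_eq {a b : ℝ} :
    2 * ENNReal.ofReal √(a * b) = ENNReal.ofReal (2 * √(a * b)) := by
  rw [ENNReal.ofReal_mul zero_le_two, ENNReal.ofReal_ofNat]

theorem two_mul_ofReal_sqrt_mul_le {w p q : ℝ} (hw : 0 < w) (hp : 0 ≤ p) (hq : 0 ≤ q) :
    2 * ENNReal.ofReal √(p * q) ≤ ENNReal.ofReal (w⁻¹ * p) + ENNReal.ofReal (w * q) := by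
  rw [two_mul_ofReal_sqrt_mul_eq, ← ENNReal.ofReal_add (by positivity) (by positivity)]
  exact ENNReal.ofReal_le_ofReal (Real.two_mul_sqrt_mul_le_inv_mul_add_mul hw hp hq)

theorem two_mul_ofReal_sqrt_mul_eq_iff {w p q : ℝ} (hw : 0 < w) (hp : 0 ≤ p) (hq : 0 < q) :
    2 * ENNReal.ofReal √(p * q) = ENNReal.ofReal (w⁻¹ * p) + ENNReal.ofReal (w * q)
      ↔ w = √(p / q) := by
  rw [two_mul_ofReal_sqrt_mul_eq, ← ENNReal.ofReal_add (by positivity) (by positivity),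
    ENNReal.ofReal_eq_ofReal_iff (by positivity) (by positivity), eq_comm,
    Real.inv_mul_add_mul_eq_two_mul_sqrt_mul_iff hw hp hq]

end ENNReal

section BalancingLoss

variable {Ω : Type*} [MeasurableSpace Ω] {μ : Measure Ω} {p q w : Ω → ℝ}

variable (μ) in
noncomputable def balancingLoss (p q w : Ω → ℝ) : ℝ≥0∞ :=
  ∫⁻ x, ENNReal.ofReal ((w x)⁻¹ * p x) ∂μ + ∫⁻ x, ENNReal.ofReal (w x * q x) ∂μ

variable (μ) in
noncomputable def bhattacharyyaCoeff (p q : Ω → ℝ) : ℝ≥0∞ :=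
  ∫⁻ x, ENNReal.ofReal √(p x * q x) ∂μ

theorem balancingLoss_eq_lintegral (hpm : Measurable p) (hwm : Measurable w) :
    balancingLoss μ p q w
      = ∫⁻ x, ENNReal.ofReal ((w x)⁻¹ * p x) + ENNReal.ofReal (w x * q x) ∂μ :=
  (lintegral_add_left (hwm.inv.mul hpm).ennreal_ofReal _).symm

theorem two_mul_bhattacharyyaCoeff_eq_lintegral (p q : Ω → ℝ) :
    2 * bhattacharyyaCoeff μ p q = ∫⁻ x, 2 * ENNReal.ofReal √(p x * q x) ∂μ :=
  (lintegral_const_mul' _ _ ENNReal.ofNat_ne_top).symm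

theorem two_mul_bhattacharyyaCoeff_le_balancingLoss (hpm : Measurable p) (hwm : Measurable w)
    (hp : ∀ x, 0 ≤ p x) (hq : ∀ x, 0 ≤ q x) (hw : ∀ x, 0 < w x) :
    2 * bhattacharyyaCoeff μ p q ≤ balancingLoss μ p q w := by
  rw [two_mul_bhattacharyyaCoeff_eq_lintegral, balancingLoss_eq_lintegral hpm hwm]
  exact lintegral_mono fun x => ENNReal.two_mul_ofReal_sqrt_mul_le (hw x) (hp x) (hq x)

theorem bhattacharyyaCoeff_le_one (hpm : Measurable p) (hp : ∀ x, 0 ≤ p x) (hq : ∀ x, 0 ≤ q x)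
    (hp1 : ∫⁻ x, ENNReal.ofReal (p x) ∂μ = 1) (hq1 : ∫⁻ x, ENNReal.ofReal (q x) ∂μ = 1) :
    bhattacharyyaCoeff μ p q ≤ 1 := by
  have h := two_mul_bhattacharyyaCoeff_le_balancingLoss (μ := μ) (w := 1) hpm measurable_const
    hp hq fun _ => one_pos
  simp only [balancingLoss, Pi.one_apply, inv_one, one_mul, hp1, hq1] at h
  rw [one_add_one_eq_two] at h
  exact (ENNReal.mul_le_mul_iff_right two_ne_zero ENNReal.ofNat_ne_top).mp
    (h.trans_eq (mul_one 2).symm)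

theorem balancingLoss_congr_ae {w' : Ω → ℝ} (h : w =ᵐ[μ] w') :
    balancingLoss μ p q w = balancingLoss μ p q w' := by
  unfold balancingLoss
  congr 1 <;> refine lintegral_congr_ae ?_ <;> filter_upwards [h] with x hx <;> rw [hx]

theorem balancingLoss_sqrt_div (hp : ∀ x, 0 ≤ p x) (hq : ∀ x, 0 ≤ q x) :
    balancingLoss μ p q (fun x => √(p x / q x)) = 2 * bhattacharyyaCoeff μ p q := by
  rw [balancingLoss, two_mul, bhattacharyyaCoeff]
  congr 1 <;> refine lintegral_congr fun x => ?_
  · rw [Real.inv_sqrt_div_mul_self (hp x)]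
  · rw [Real.sqrt_div_mul_self (hq x)]

theorem ae_eq_sqrt_div_of_balancingLoss_eq (hpm : Measurable p) (hqm : Measurable q)
    (hwm : Measurable w) (hp : ∀ x, 0 ≤ p x) (hq : ∀ x, 0 ≤ q x) (hw : ∀ x, 0 < w x)
    (hq_pos : ∀ᵐ x ∂μ, 0 < q x) (hfin : bhattacharyyaCoeff μ p q ≠ ∞)
    (heq : balancingLoss μ p q w = 2 * bhattacharyyaCoeff μ p q) :
    ∀ᵐ x ∂μ, w x = √(p x / q x) := by
  have hae := ae_eq_of_ae_le_of_lintegral_le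
    (ae_of_all μ fun x => ENNReal.two_mul_ofReal_sqrt_mul_le (hw x) (hp x) (hq x))
    (two_mul_bhattacharyyaCoeff_eq_lintegral p q ▸ ENNReal.mul_ne_top ENNReal.ofNat_ne_top hfin)
    (by fun_prop)
    (by rw [← balancingLoss_eq_lintegral hpm hwm, ← two_mul_bhattacharyyaCoeff_eq_lintegral, heq])
  filter_upwards [hae, hq_pos] with x hx hqx
  exact (ENNReal.two_mul_ofReal_sqrt_mul_eq_iff (hw x) (hp x) hqx).mp hx

end BalancingLoss

theorem stmt_4_general {Ω : Type*} [MeasurableSpace Ω] (μ : Measure Ω)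
    (p q : Ω → ℝ) (hpm : Measurable p) (hqm : Measurable q)
    (hp0 : ∀ x, 0 ≤ p x) (hq0 : ∀ x, 0 ≤ q x)
    (hp1 : ∫⁻ x, ENNReal.ofReal (p x) ∂μ = 1)
    (hq1 : ∫⁻ x, ENNReal.ofReal (q x) ∂μ = 1)
    (w : Ω → ℝ) (hwm : Measurable w) (hw : ∀ x, 0 < w x) :
    2 * (∫⁻ x, ENNReal.ofReal (Real.sqrt (p x * q x)) ∂μ)
      ≤ (∫⁻ x, ENNReal.ofReal ((w x)⁻¹ * p x) ∂μ) + ∫⁻ x, ENNReal.ofReal (w x * q x) ∂μ ∧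
    ((∀ᵐ x ∂μ, 0 < p x) → (∀ᵐ x ∂μ, 0 < q x) →
      (((∫⁻ x, ENNReal.ofReal ((w x)⁻¹ * p x) ∂μ) + ∫⁻ x, ENNReal.ofReal (w x * q x) ∂μ
          = 2 * ∫⁻ x, ENNReal.ofReal (Real.sqrt (p x * q x)) ∂μ)
        ↔ (∀ᵐ x ∂μ, w x = Real.sqrt (p x / q x))) ∧
      (∫⁻ x, ENNReal.ofReal ((Real.sqrt (p x / q x))⁻¹ * p x) ∂μ)
          + (∫⁻ x, ENNReal.ofReal (Real.sqrt (p x / q x) * q x) ∂μ)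
        = 2 * ∫⁻ x, ENNReal.ofReal (Real.sqrt (p x * q x)) ∂μ) := by
  have hfin : bhattacharyyaCoeff μ p q ≠ ∞ :=
    ((bhattacharyyaCoeff_le_one hpm hp0 hq0 hp1 hq1).trans_lt ENNReal.one_lt_top).ne
  refine ⟨two_mul_bhattacharyyaCoeff_le_balancingLoss hpm hwm hp0 hq0 hw, fun _ hq_pos => ⟨⟨?_, ?_⟩,
    balancingLoss_sqrt_div hp0 hq0⟩⟩
  · exact ae_eq_sqrt_div_of_balancingLoss_eq hpm hqm hwm hp0 hq0 hw hq_pos hfin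
  · exact fun h => (balancingLoss_congr_ae h).trans (balancingLoss_sqrt_div hp0 hq0)

/-- For every measurable `w : Ω → (0,∞)`, the balancing loss satisfies
`l(w) = ∫ w⁻¹ p dμ + ∫ w q dμ ≥ 2 ∫ √(p·q) dμ`. Moreover, if `p` and `q` are `μ`-a.e.
strictly positive, then equality holds if and only if `w = √(p/q)` `μ`-a.e.; in particular
`w* = √(p/q)` is the (a.e.-unique) minimizer of the balancing loss. -/
theorem stmt_4 {Ω : Type*} [MeasurableSpace Ω] (μ : Measure Ω) [SigmaFinite μ]
    (p q : Ω → ℝ) (hpm : Measurable p) (hqm : Measurable q)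
    (hp0 : ∀ x, 0 ≤ p x) (hq0 : ∀ x, 0 ≤ q x)
    (hp1 : ∫⁻ x, ENNReal.ofReal (p x) ∂μ = 1)
    (hq1 : ∫⁻ x, ENNReal.ofReal (q x) ∂μ = 1)
    (w : Ω → ℝ) (hwm : Measurable w) (hw : ∀ x, 0 < w x) :
    2 * (∫⁻ x, ENNReal.ofReal (Real.sqrt (p x * q x)) ∂μ)
      ≤ (∫⁻ x, ENNReal.ofReal ((w x)⁻¹ * p x) ∂μ) + ∫⁻ x, ENNReal.ofReal (w x * q x) ∂μ ∧
    ((∀ᵐ x ∂μ, 0 < p x) → (∀ᵐ x ∂μ, 0 < q x) →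
      (((∫⁻ x, ENNReal.ofReal ((w x)⁻¹ * p x) ∂μ) + ∫⁻ x, ENNReal.ofReal (w x * q x) ∂μ
          = 2 * ∫⁻ x, ENNReal.ofReal (Real.sqrt (p x * q x)) ∂μ)
        ↔ (∀ᵐ x ∂μ, w x = Real.sqrt (p x / q x))) ∧
      (∫⁻ x, ENNReal.ofReal ((Real.sqrt (p x / q x))⁻¹ * p x) ∂μ)
          + (∫⁻ x, ENNReal.ofReal (Real.sqrt (p x / q x) * q x) ∂μ)
        = 2 * ∫⁻ x, ENNReal.ofReal (Real.sqrt (p x * q x)) ∂μ) :=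
  stmt_4_general μ p q hpm hqm hp0 hq0 hp1 hq1 w hwm hw
end

section
/- For every measurable g : Ω → ℝ with g < 1/2 pointwise and such that ∫ (1 − 2g) p dμ < ∞ and ∫ (1 − 2g)^{-1} q dμ < ∞, one has ∫ g p dμ − ∫ (g/(1 − 2g)) q dμ ≤ (1/2)∫ (√p − √q)² dμ. That is, the variational (dual) objective for the squared Hellinger divergence is bounded above by the squared Hellinger distance. -/
open MeasureTheory

/-!
The inequality holds pointwise, by completing the square: writing `a = 1 - 2g > 0`,
`s = √p`, `t = √q`, one has `(s - t)² / 2 - (g s² - (g / a) t²) = (a s - t)² / (2a) ≥ 0`.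
Integrating it is legitimate because `g p`, `g q / (1 - 2g)` and `(√p - √q)² ≤ p + q`
are all integrable.
-/

theorem mul_sq_sub_div_mul_sq_le_half_mul_sq_sub {g : ℝ} (hg : g < 1 / 2) (s t : ℝ) :
    g * s ^ 2 - g / (1 - 2 * g) * t ^ 2 ≤ 1 / 2 * (s - t) ^ 2 := by
  have ha : 0 < 1 - 2 * g := by linarith
  have hsquare : 1 / 2 * (s - t) ^ 2 - (g * s ^ 2 - g / (1 - 2 * g) * t ^ 2)
      = ((1 - 2 * g) * s - t) ^ 2 / (2 * (1 - 2 * g)) := by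
    field_simp
    ring
  have hnonneg : 0 ≤ ((1 - 2 * g) * s - t) ^ 2 / (2 * (1 - 2 * g)) := by positivity
  linarith

theorem integrable_sq_sqrt_sub_sqrt {Ω : Type*} [MeasurableSpace Ω] {μ : Measure Ω}
    {p q : Ω → ℝ} (hp : Integrable p μ) (hq : Integrable q μ)
    (hp0 : 0 ≤ᵐ[μ] p) (hq0 : 0 ≤ᵐ[μ] q) :
    Integrable (fun x => (Real.sqrt (p x) - Real.sqrt (q x)) ^ 2) μ := by
  refine (hp.add hq).mono' ?_ ?_
  · exact ((Real.continuous_sqrt.comp_aestronglyMeasurable hp.1).sub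
      (Real.continuous_sqrt.comp_aestronglyMeasurable hq.1)).pow 2
  · filter_upwards [hp0, hq0] with x hpx hqx
    rw [Real.norm_of_nonneg (sq_nonneg _), Pi.add_apply, sub_sq, Real.sq_sqrt hpx,
      Real.sq_sqrt hqx]
    nlinarith [Real.sqrt_nonneg (p x), Real.sqrt_nonneg (q x)]

theorem stmt_6_general {Ω : Type*} [MeasurableSpace Ω] (μ : Measure Ω)
    (p q : Ω → ℝ)
    (hp0 : ∀ x, 0 ≤ p x) (hq0 : ∀ x, 0 ≤ q x)
    (hpi : Integrable p μ) (hqi : Integrable q μ)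
    (g : Ω → ℝ) (hg : ∀ x, g x < 1 / 2)
    (h1 : Integrable (fun x => (1 - 2 * g x) * p x) μ)
    (h2 : Integrable (fun x => (1 - 2 * g x)⁻¹ * q x) μ) :
    ∫ x, g x * p x ∂μ - ∫ x, (g x / (1 - 2 * g x)) * q x ∂μ
      ≤ (1 / 2) * ∫ x, (Real.sqrt (p x) - Real.sqrt (q x)) ^ 2 ∂μ := by
  have hgp : Integrable (fun x => g x * p x) μ :=
    ((hpi.sub h1).div_const 2).congr (ae_of_all _ fun x => by simp only [Pi.sub_apply]; ring)
  have hgq : Integrable (fun x => g x / (1 - 2 * g x) * q x) μ := by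
    refine ((h2.sub hqi).div_const 2).congr (ae_of_all _ fun x => ?_)
    have ha : 1 - 2 * g x ≠ 0 := by linarith [hg x]
    simp only [Pi.sub_apply]
    field_simp
    ring
  have hH := integrable_sq_sqrt_sub_sqrt hpi hqi (ae_of_all _ hp0) (ae_of_all _ hq0)
  rw [← integral_sub hgp hgq, ← integral_const_mul]
  refine integral_mono (hgp.sub hgq) (hH.const_mul _) fun x => ?_
  simpa only [Real.sq_sqrt (hp0 x), Real.sq_sqrt (hq0 x)] using
    mul_sq_sub_div_mul_sq_le_half_mul_sq_sub (hg x) (Real.sqrt (p x)) (Real.sqrt (q x))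

/-- For every measurable `g : Ω → ℝ` with `g < 1/2` pointwise and such that
`∫ (1 − 2g) p dμ < ∞` and `∫ (1 − 2g)⁻¹ q dμ < ∞`, one has
`∫ g p dμ − ∫ (g/(1 − 2g)) q dμ ≤ (1/2)∫ (√p − √q)² dμ`; that is, the variational (dual)
objective for the squared Hellinger divergence is bounded above by the squared Hellinger
distance. -/
theorem stmt_6 {Ω : Type*} [MeasurableSpace Ω] (μ : Measure Ω) [SigmaFinite μ]
    (p q : Ω → ℝ) (hpm : Measurable p) (hqm : Measurable q)
    (hp0 : ∀ x, 0 ≤ p x) (hq0 : ∀ x, 0 ≤ q x)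
    (hpi : Integrable p μ) (hqi : Integrable q μ)
    (hp1 : ∫ x, p x ∂μ = 1) (hq1 : ∫ x, q x ∂μ = 1)
    (g : Ω → ℝ) (hgm : Measurable g) (hg : ∀ x, g x < 1 / 2)
    (h1 : Integrable (fun x => (1 - 2 * g x) * p x) μ)
    (h2 : Integrable (fun x => (1 - 2 * g x)⁻¹ * q x) μ) :
    ∫ x, g x * p x ∂μ - ∫ x, (g x / (1 - 2 * g x)) * q x ∂μ
      ≤ (1 / 2) * ∫ x, (Real.sqrt (p x) - Real.sqrt (q x)) ^ 2 ∂μ :=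
  stmt_6_general μ p q hp0 hq0 hpi hqi g hg h1 h2
end

section
/- Suppose p and q are μ-a.e. strictly positive and let g* = 1/2 − (1/2)√(q/p). Then g* < 1/2 pointwise and ∫ g* p dμ − ∫ (g*/(1 − 2g*)) q dμ = (1/2)∫ (√p − √q)² dμ; i.e., g* attains the squared Hellinger distance in the variational (dual) objective for the squared Hellinger divergence. -/
open MeasureTheory

/-! On `{p > 0, q > 0}` the witness satisfies `g p = (p - √p √q) / 2` and
`g / (1 - 2 g) q = (√p √q - q) / 2`, so the dual objective's integrand is pointwise
`(p + q) / 2 - √p √q = (√p - √q)² / 2`. Both terms are integrable because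
`√p √q ≤ (p + q) / 2`. -/

theorem Real.sqrt_mul_sqrt_le_half_abs_add (a b : ℝ) : √a * √b ≤ (|a| + |b|) / 2 := by
  have ha : √a ≤ √|a| := Real.sqrt_le_sqrt (le_abs_self a)
  have hb : √b ≤ √|b| := Real.sqrt_le_sqrt (le_abs_self b)
  have hab : √a * √b ≤ √|a| * √|b| :=
    mul_le_mul ha hb (Real.sqrt_nonneg b) (Real.sqrt_nonneg _)
  nlinarith [sq_nonneg (√|a| - √|b|), Real.sq_sqrt (abs_nonneg a), Real.sq_sqrt (abs_nonneg b)]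

theorem MeasureTheory.Integrable.sqrt_mul_sqrt {α : Type*} [MeasurableSpace α] {μ : Measure α}
    {f g : α → ℝ} (hf : Integrable f μ) (hg : Integrable g μ) :
    Integrable (fun x => √(f x) * √(g x)) μ := by
  refine ((hf.abs.add hg.abs).div_const 2).mono' ?_ (ae_of_all _ fun x => ?_)
  · exact (Real.continuous_sqrt.comp_aestronglyMeasurable hf.1).mul
      (Real.continuous_sqrt.comp_aestronglyMeasurable hg.1)
  · rw [Real.norm_eq_abs, abs_of_nonneg (by positivity)]
    exact Real.sqrt_mul_sqrt_le_half_abs_add _ _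

noncomputable def hellingerDualWitness (a b : ℝ) : ℝ := 1 / 2 - 1 / 2 * √(b / a)

section hellingerDualWitness

variable {a b : ℝ}

theorem hellingerDualWitness_lt_half (ha : 0 < a) (hb : 0 < b) :
    hellingerDualWitness a b < 1 / 2 := by
  have : 0 < √(b / a) := Real.sqrt_pos.mpr (div_pos hb ha)
  unfold hellingerDualWitness
  linarith

theorem hellingerDualWitness_mul (ha : 0 < a) (b : ℝ) :
    hellingerDualWitness a b * a = a / 2 - √a * √b / 2 := by
  rw [hellingerDualWitness, Real.sqrt_div' b ha.le]
  field_simp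
  linear_combination √b * Real.sq_sqrt ha.le

theorem hellingerDualWitness_div_mul (ha : 0 < a) (hb : 0 ≤ b) :
    hellingerDualWitness a b / (1 - 2 * hellingerDualWitness a b) * b
      = √a * √b / 2 - b / 2 := by
  rcases hb.eq_or_lt with rfl | hb
  · simp
  have hden : 1 - 2 * hellingerDualWitness a b = √b / √a := by
    rw [hellingerDualWitness, Real.sqrt_div' b ha.le]
    ring
  rw [hden, hellingerDualWitness, Real.sqrt_div' b ha.le]
  field_simp
  linear_combination (-√a) * Real.sq_sqrt hb.le

end hellingerDualWitness

theorem stmt_7_general {Ω : Type*} [MeasurableSpace Ω] (μ : Measure Ω)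
    (p q : Ω → ℝ)
    (hpi : Integrable p μ) (hqi : Integrable q μ)
    (hppos : ∀ᵐ x ∂μ, 0 < p x) (hqpos : ∀ᵐ x ∂μ, 0 < q x)
    (g : Ω → ℝ) (hgdef : ∀ x, g x = 1 / 2 - (1 / 2) * Real.sqrt (q x / p x)) :
    (∀ᵐ x ∂μ, g x < 1 / 2) ∧
    ∫ x, g x * p x ∂μ - ∫ x, (g x / (1 - 2 * g x)) * q x ∂μ
      = (1 / 2) * ∫ x, (Real.sqrt (p x) - Real.sqrt (q x)) ^ 2 ∂μ := by
  obtain rfl : g = fun x => hellingerDualWitness (p x) (q x) := funext hgdef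
  refine ⟨by filter_upwards [hppos, hqpos] with x hpx hqx
    using hellingerDualWitness_lt_half hpx hqx, ?_⟩
  have hpq := hpi.sqrt_mul_sqrt hqi
  have hgp : (fun x => p x / 2 - √(p x) * √(q x) / 2)
      =ᵐ[μ] fun x => hellingerDualWitness (p x) (q x) * p x := by
    filter_upwards [hppos] with x hpx using (hellingerDualWitness_mul hpx _).symm
  have hgq : (fun x => √(p x) * √(q x) / 2 - q x / 2) =ᵐ[μ] fun x =>
      hellingerDualWitness (p x) (q x) / (1 - 2 * hellingerDualWitness (p x) (q x)) * q x := by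
    filter_upwards [hppos, hqpos] with x hpx hqx
      using (hellingerDualWitness_div_mul hpx hqx.le).symm
  rw [← integral_sub (((hpi.div_const 2).sub (hpq.div_const 2)).congr hgp)
    (((hpq.div_const 2).sub (hqi.div_const 2)).congr hgq), ← integral_const_mul]
  refine integral_congr_ae ?_
  filter_upwards [hgp, hgq, hppos, hqpos] with x hgpx hgqx hpx hqx
  rw [← hgpx, ← hgqx]
  linear_combination (-1 / 2) * Real.sq_sqrt hpx.le - (1 / 2) * Real.sq_sqrt hqx.le

/-- Suppose `p` and `q` are `μ`-a.e. strictly positive and let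
`g* = 1/2 − (1/2)√(q/p)`. Then `g* < 1/2` (a.e.-)pointwise and
`∫ g* p dμ − ∫ (g*/(1 − 2g*)) q dμ = (1/2)∫ (√p − √q)² dμ`; i.e., `g*` attains the squared
Hellinger distance in the variational (dual) objective for the squared Hellinger divergence. -/
theorem stmt_7 {Ω : Type*} [MeasurableSpace Ω] (μ : Measure Ω) [SigmaFinite μ]
    (p q : Ω → ℝ) (hpm : Measurable p) (hqm : Measurable q)
    (hp0 : ∀ x, 0 ≤ p x) (hq0 : ∀ x, 0 ≤ q x)
    (hpi : Integrable p μ) (hqi : Integrable q μ)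
    (hp1 : ∫ x, p x ∂μ = 1) (hq1 : ∫ x, q x ∂μ = 1)
    (hppos : ∀ᵐ x ∂μ, 0 < p x) (hqpos : ∀ᵐ x ∂μ, 0 < q x)
    (g : Ω → ℝ) (hgdef : ∀ x, g x = 1 / 2 - (1 / 2) * Real.sqrt (q x / p x)) :
    (∀ᵐ x ∂μ, g x < 1 / 2) ∧
    ∫ x, g x * p x ∂μ - ∫ x, (g x / (1 - 2 * g x)) * q x ∂μ
      = (1 / 2) * ∫ x, (Real.sqrt (p x) - Real.sqrt (q x)) ^ 2 ∂μ :=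
  stmt_7_general μ p q hpi hqi hppos hqpos g hgdef
end

section
/- Let w₀ : Ω → (0,∞) be measurable with Z_p := ∫ w₀^{-1} p dμ ∈ (0,∞) and Z_q := ∫ w₀ q dμ ∈ (0,∞). Let T = {A₁, …, A_m} be a finite measurable partition of Ω with a_j := ∫_{A_j} w₀^{-1} p dμ > 0 and b_j := ∫_{A_j} w₀ q dμ > 0 for all j, and define discrete probability vectors P_T(j) = a_j / Z_p and Q_T(j) = b_j / Z_q, and the discrete Hellinger distance H(P_T, Q_T) = (1/√2)·√(∑_{j=1}^m (√P_T(j) − √Q_T(j))²). Then the minimum over β ∈ ℝ^m of the balancing loss of w₀·exp(∑_j β_j 1_{A_j}) equals 2√(Z_p Z_q) · ∑_{j=1}^m √(P_T(j) Q_T(j)) = 2√(Z_p Z_q) · (1 − H(P_T, Q_T)²). Consequently, among such partitions, a partition minimizes the partition-optimal balancing loss if and only if it maximizes the discrete Hellinger distance H(P_T, Q_T). -/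
/-!
Multiplying `w₀` by `exp β_j` on the cell `A_j` rescales the two halves of the balancing loss
on that cell by `exp (-β_j)` and `exp β_j`, so the loss splits into independent one-dimensional
problems `exp (-β_j) a_j + exp β_j b_j`, each minimized by AM-GM at the value `2 √(a_j b_j)`.
Since `P_T` and `Q_T` are probability vectors, `∑ √(P_T Q_T) = 1 - H(P_T, Q_T)²`, which is
decreasing in `H`.
-/

open MeasureTheory Set

section Partition

variable {Ω ι : Type*} [Fintype ι] {A : ι → Set Ω}

lemma sum_indicator_apply_of_mem {M : Type*} [AddCommMonoid M]
    (hd : Pairwise fun i j => Disjoint (A i) (A j)) (f : ι → Ω → M) {x : Ω} {j : ι}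
    (hx : x ∈ A j) : ∑ i, (A i).indicator (f i) x = f j x := by
  rw [Finset.sum_eq_single_of_mem j (Finset.mem_univ j), indicator_of_mem hx]
  exact fun i _ hij => indicator_of_notMem (disjoint_left.mp (hd hij).symm hx) _

variable [MeasurableSpace Ω] {μ : Measure Ω}

lemma sum_setIntegral_div_eq_one (hm : ∀ j, MeasurableSet (A j))
    (hd : Pairwise fun i j => Disjoint (A i) (A j)) (hcov : ⋃ j, A j = univ)
    {f : Ω → ℝ} (hf : Integrable f μ) {Z : ℝ} (hZ : Z = ∫ x, f x ∂μ) (hZ0 : Z ≠ 0) :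
    ∑ j, (∫ x in A j, f x ∂μ) / Z = 1 := by
  calc ∑ j, (∫ x in A j, f x ∂μ) / Z = (∫ x in ⋃ j, A j, f x ∂μ) / Z := by
        rw [integral_iUnion hm hd hf.integrableOn, tsum_fintype, Finset.sum_div]
    _ = 1 := by rw [hcov, setIntegral_univ, ← hZ, div_self hZ0]

lemma integral_comp_sum_indicator_mul (hm : ∀ j, MeasurableSet (A j))
    (hd : Pairwise fun i j => Disjoint (A i) (A j)) (hcov : ⋃ j, A j = univ)
    (φ : ℝ → ℝ) (β : ι → ℝ) {f : Ω → ℝ} (hf : Integrable f μ) :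
    ∫ x, φ (∑ j, (A j).indicator (fun _ => β j) x) * f x ∂μ
      = ∑ j, φ (β j) * ∫ x in A j, f x ∂μ := by
  have hsplit : ∀ x, φ (∑ j, (A j).indicator (fun _ => β j) x) * f x
      = ∑ j, (A j).indicator (fun y => φ (β j) * f y) x := fun x => by
    obtain ⟨j, hj⟩ := mem_iUnion.mp (hcov ▸ mem_univ x)
    rw [sum_indicator_apply_of_mem hd _ hj, sum_indicator_apply_of_mem hd _ hj]
  simp_rw [hsplit]
  rw [integral_finsetSum _ fun j _ => (hf.const_mul _).indicator (hm j)]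
  simp_rw [integral_indicator (hm _), integral_const_mul]

lemma balancingLoss_tilt_eq (hm : ∀ j, MeasurableSet (A j))
    (hd : Pairwise fun i j => Disjoint (A i) (A j)) (hcov : ⋃ j, A j = univ)
    {p q w : Ω → ℝ} (hpi : Integrable (fun x => (w x)⁻¹ * p x) μ)
    (hqi : Integrable (fun x => w x * q x) μ) (β : ι → ℝ) :
    (∫ x, (w x * Real.exp (∑ j, (A j).indicator (fun _ => β j) x))⁻¹ * p x ∂μ)
        + ∫ x, (w x * Real.exp (∑ j, (A j).indicator (fun _ => β j) x)) * q x ∂μ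
      = ∑ j, (Real.exp (-β j) * (∫ x in A j, (w x)⁻¹ * p x ∂μ)
          + Real.exp (β j) * ∫ x in A j, w x * q x ∂μ) := by
  have hp : ∀ x, (w x * Real.exp (∑ j, (A j).indicator (fun _ => β j) x))⁻¹ * p x
      = Real.exp (-∑ j, (A j).indicator (fun _ => β j) x) * ((w x)⁻¹ * p x) := fun x => by
    rw [mul_inv, Real.exp_neg]; ring
  have hq : ∀ x, (w x * Real.exp (∑ j, (A j).indicator (fun _ => β j) x)) * q x
      = Real.exp (∑ j, (A j).indicator (fun _ => β j) x) * (w x * q x) := fun x => by ring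
  simp_rw [hp, hq]
  rw [integral_comp_sum_indicator_mul hm hd hcov (fun t => Real.exp (-t)) β hpi,
    integral_comp_sum_indicator_mul hm hd hcov Real.exp β hqi, Finset.sum_add_distrib]

end Partition

lemma isLeast_range_sum {ι α M : Type*} [Fintype ι] [AddCommMonoid M] [PartialOrder M]
    [IsOrderedAddMonoid M] {f : ι → α → M} {c : ι → M}
    (h : ∀ j, IsLeast (range (f j)) (c j)) :
    IsLeast (range fun β : ι → α => ∑ j, f j (β j)) (∑ j, c j) := by
  choose β hβ using fun j => (h j).1
  refine ⟨⟨β, Finset.sum_congr rfl fun j _ => hβ j⟩, ?_⟩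
  rintro _ ⟨γ, rfl⟩
  exact Finset.sum_le_sum fun j _ => (h j).2 ⟨γ j, rfl⟩

lemma isLeast_range_exp_neg_mul_add_exp_mul {a b : ℝ} (ha : 0 < a) (hb : 0 < b) :
    IsLeast (range fun t => Real.exp (-t) * a + Real.exp t * b) (2 * √(a * b)) := by
  refine ⟨⟨Real.log (√a / √b), ?_⟩, ?_⟩
  · have hsa : 0 < √a := Real.sqrt_pos.mpr ha
    have hsb : 0 < √b := Real.sqrt_pos.mpr hb
    simp only [Real.exp_neg, Real.exp_log (div_pos hsa hsb), Real.sqrt_mul ha.le]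
    nth_rewrite 2 [← Real.mul_self_sqrt ha.le]
    nth_rewrite 3 [← Real.mul_self_sqrt hb.le]
    field_simp
    ring
  · rintro _ ⟨t, rfl⟩
    have hx : 0 ≤ Real.exp (-t) * a := by positivity
    have hy : 0 ≤ Real.exp t * b := by positivity
    have hxy : a * b = (Real.exp (-t) * a) * (Real.exp t * b) := by
      rw [Real.exp_neg]; field_simp
    calc 2 * √(a * b) = 2 * √(Real.exp (-t) * a) * √(Real.exp t * b) := by
          rw [hxy, Real.sqrt_mul hx, mul_assoc]
      _ ≤ √(Real.exp (-t) * a) ^ 2 + √(Real.exp t * b) ^ 2 := two_mul_le_add_sq _ _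
      _ = Real.exp (-t) * a + Real.exp t * b := by rw [Real.sq_sqrt hx, Real.sq_sqrt hy]

section Hellinger

variable {ι : Type*} [Fintype ι]

/-- The factor `1 / √2` normalizes the distance of two probability vectors to `[0, 1]`. -/
noncomputable def hellinger (P Q : ι → ℝ) : ℝ :=
  √(∑ j, (√(P j) - √(Q j)) ^ 2) / √2

lemma hellinger_nonneg (P Q : ι → ℝ) : 0 ≤ hellinger P Q := by
  unfold hellinger; positivity

lemma one_sub_hellinger_sq {P Q : ι → ℝ} (hP : ∀ j, 0 ≤ P j) (hQ : ∀ j, 0 ≤ Q j)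
    (hP1 : ∑ j, P j = 1) (hQ1 : ∑ j, Q j = 1) :
    1 - hellinger P Q ^ 2 = ∑ j, √(P j * Q j) := by
  have hterm : ∀ j, (√(P j) - √(Q j)) ^ 2 = P j + Q j - 2 * √(P j * Q j) := fun j => by
    rw [sub_sq, Real.sq_sqrt (hP j), Real.sq_sqrt (hQ j), Real.sqrt_mul (hP j)]
    ring
  rw [hellinger, div_pow, Real.sq_sqrt (Finset.sum_nonneg fun j _ => sq_nonneg _),
    Real.sq_sqrt zero_le_two, Finset.sum_congr rfl fun j _ => hterm j, Finset.sum_sub_distrib,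
    Finset.sum_add_distrib, hP1, hQ1, ← Finset.mul_sum]
  ring

lemma one_sub_hellinger_sq_of_partition {Ω : Type*} [MeasurableSpace Ω] {μ : Measure Ω}
    {A : ι → Set Ω} (hm : ∀ j, MeasurableSet (A j))
    (hd : Pairwise fun i j => Disjoint (A i) (A j)) (hcov : ⋃ j, A j = univ)
    {f g : Ω → ℝ} (hf : Integrable f μ) (hg : Integrable g μ) {Zf Zg : ℝ}
    (hZf : Zf = ∫ x, f x ∂μ) (hZg : Zg = ∫ x, g x ∂μ) (hZf0 : 0 < Zf) (hZg0 : 0 < Zg)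
    (hf0 : ∀ j, 0 ≤ ∫ x in A j, f x ∂μ) (hg0 : ∀ j, 0 ≤ ∫ x in A j, g x ∂μ) {P Q : ι → ℝ}
    (hP : ∀ j, P j = (∫ x in A j, f x ∂μ) / Zf) (hQ : ∀ j, Q j = (∫ x in A j, g x ∂μ) / Zg) :
    1 - hellinger P Q ^ 2 = ∑ j, √(P j * Q j) := by
  refine one_sub_hellinger_sq (fun j => hP j ▸ div_nonneg (hf0 j) hZf0.le)
    (fun j => hQ j ▸ div_nonneg (hg0 j) hZg0.le) ?_ ?_
  · simpa only [hP] using sum_setIntegral_div_eq_one hm hd hcov hf hZf hZf0.ne'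
  · simpa only [hQ] using sum_setIntegral_div_eq_one hm hd hcov hg hZg hZg0.ne'

end Hellinger

theorem stmt_9_general {Ω : Type*} [MeasurableSpace Ω] (μ : Measure Ω)
    (p q : Ω → ℝ)
    (w₀ : Ω → ℝ)
    (Zp Zq : ℝ)
    (hZpi : Integrable (fun x => (w₀ x)⁻¹ * p x) μ)
    (hZqi : Integrable (fun x => w₀ x * q x) μ)
    (hZp : Zp = ∫ x, (w₀ x)⁻¹ * p x ∂μ) (hZq : Zq = ∫ x, w₀ x * q x ∂μ)
    (hZp0 : 0 < Zp) (hZq0 : 0 < Zq)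
    -- the partition T = {A₁, …, A_m₁} and its induced discrete distributions
    (m₁ : ℕ) (A₁ : Fin m₁ → Set Ω) (hA₁m : ∀ j, MeasurableSet (A₁ j))
    (hA₁disj : Pairwise fun i j => Disjoint (A₁ i) (A₁ j))
    (hA₁cov : ⋃ j, A₁ j = Set.univ)
    (a₁ b₁ : Fin m₁ → ℝ)
    (ha₁ : ∀ j, a₁ j = ∫ x in A₁ j, (w₀ x)⁻¹ * p x ∂μ)
    (hb₁ : ∀ j, b₁ j = ∫ x in A₁ j, w₀ x * q x ∂μ)
    (ha₁0 : ∀ j, 0 < a₁ j) (hb₁0 : ∀ j, 0 < b₁ j)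
    (P₁ Q₁ : Fin m₁ → ℝ)
    (hP₁ : ∀ j, P₁ j = a₁ j / Zp) (hQ₁ : ∀ j, Q₁ j = b₁ j / Zq)
    (H₁ : ℝ)
    (hH₁ : H₁ = Real.sqrt (∑ j, (Real.sqrt (P₁ j) - Real.sqrt (Q₁ j)) ^ 2) / Real.sqrt 2)
    -- a second partition T' = {A₁', …, A_m₂'} of the same kind, for the comparison claim
    (m₂ : ℕ) (A₂ : Fin m₂ → Set Ω) (hA₂m : ∀ j, MeasurableSet (A₂ j))
    (hA₂disj : Pairwise fun i j => Disjoint (A₂ i) (A₂ j))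
    (hA₂cov : ⋃ j, A₂ j = Set.univ)
    (a₂ b₂ : Fin m₂ → ℝ)
    (ha₂ : ∀ j, a₂ j = ∫ x in A₂ j, (w₀ x)⁻¹ * p x ∂μ)
    (hb₂ : ∀ j, b₂ j = ∫ x in A₂ j, w₀ x * q x ∂μ)
    (ha₂0 : ∀ j, 0 < a₂ j) (hb₂0 : ∀ j, 0 < b₂ j)
    (P₂ Q₂ : Fin m₂ → ℝ)
    (hP₂ : ∀ j, P₂ j = a₂ j / Zp) (hQ₂ : ∀ j, Q₂ j = b₂ j / Zq)
    (H₂ : ℝ)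
    (hH₂ : H₂ = Real.sqrt (∑ j, (Real.sqrt (P₂ j) - Real.sqrt (Q₂ j)) ^ 2) / Real.sqrt 2) :
    -- the partition-optimal balancing loss on T
    IsLeast
      {y : ℝ | ∃ β : Fin m₁ → ℝ,
        y = (∫ x, (w₀ x * Real.exp (∑ j, Set.indicator (A₁ j) (fun _ => β j) x))⁻¹ * p x ∂μ)
          + ∫ x, (w₀ x * Real.exp (∑ j, Set.indicator (A₁ j) (fun _ => β j) x)) * q x ∂μ}
      (2 * Real.sqrt (Zp * Zq) * ∑ j, Real.sqrt (P₁ j * Q₁ j)) ∧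
    2 * Real.sqrt (Zp * Zq) * ∑ j, Real.sqrt (P₁ j * Q₁ j)
      = 2 * Real.sqrt (Zp * Zq) * (1 - H₁ ^ 2) ∧
    -- consequently: lower partition-optimal loss ↔ larger discrete Hellinger distance
    (2 * Real.sqrt (Zp * Zq) * ∑ j, Real.sqrt (P₁ j * Q₁ j)
        ≤ 2 * Real.sqrt (Zp * Zq) * ∑ j, Real.sqrt (P₂ j * Q₂ j)
      ↔ H₂ ≤ H₁) := by
  have hH₁sq : ∑ j, √(P₁ j * Q₁ j) = 1 - H₁ ^ 2 := hH₁ ▸ (one_sub_hellinger_sq_of_partition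
    hA₁m hA₁disj hA₁cov hZpi hZqi hZp hZq hZp0 hZq0 (fun j => ha₁ j ▸ (ha₁0 j).le)
    (fun j => hb₁ j ▸ (hb₁0 j).le) (fun j => ha₁ j ▸ hP₁ j) (fun j => hb₁ j ▸ hQ₁ j)).symm
  have hH₂sq : ∑ j, √(P₂ j * Q₂ j) = 1 - H₂ ^ 2 := hH₂ ▸ (one_sub_hellinger_sq_of_partition
    hA₂m hA₂disj hA₂cov hZpi hZqi hZp hZq hZp0 hZq0 (fun j => ha₂ j ▸ (ha₂0 j).le)
    (fun j => hb₂ j ▸ (hb₂0 j).le) (fun j => ha₂ j ▸ hP₂ j) (fun j => hb₂ j ▸ hQ₂ j)).symm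
  have hmin : 2 * √(Zp * Zq) * ∑ j, √(P₁ j * Q₁ j) = ∑ j, 2 * √(a₁ j * b₁ j) := by
    rw [Finset.mul_sum]
    refine Finset.sum_congr rfl fun j _ => ?_
    rw [hP₁, hQ₁, div_mul_div_comm, Real.sqrt_div' _ (by positivity)]
    field_simp
  refine ⟨?_, by rw [hH₁sq], ?_⟩
  · rw [hmin]
    simp only [balancingLoss_tilt_eq hA₁m hA₁disj hA₁cov hZpi hZqi, ← ha₁, ← hb₁]
    simpa only [range, eq_comm] using
      isLeast_range_sum fun j => isLeast_range_exp_neg_mul_add_exp_mul (ha₁0 j) (hb₁0 j)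
  · have hZ : 0 < 2 * √(Zp * Zq) := by positivity
    rw [hH₁sq, hH₂sq, mul_le_mul_iff_right₀ hZ, sub_le_sub_iff_left,
      pow_le_pow_iff_left₀ (hH₂ ▸ hellinger_nonneg P₂ Q₂) (hH₁ ▸ hellinger_nonneg P₁ Q₁)
        two_ne_zero]

/-- Let `w₀ : Ω → (0,∞)` be measurable with
`Z_p := ∫ w₀⁻¹ p dμ ∈ (0,∞)` and `Z_q := ∫ w₀ q dμ ∈ (0,∞)`. Let `T = {A₁, …, A_m}` be a
finite measurable partition of `Ω` with `a_j > 0` and `b_j > 0` for all `j`, and define the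
discrete probability vectors `P_T(j) = a_j / Z_p` and `Q_T(j) = b_j / Z_q`, and the discrete
Hellinger distance `H(P_T,Q_T) = (1/√2)·√(∑_j (√P_T(j) − √Q_T(j))²)`. Then the minimum over
`β ∈ ℝ^m` of the balancing loss of `w₀·exp(∑_j β_j 1_{A_j})` equals
`2√(Z_p Z_q) · ∑_j √(P_T(j) Q_T(j)) = 2√(Z_p Z_q)·(1 − H(P_T,Q_T)²)`. Consequently, among
such partitions, a partition minimizes the partition-optimal balancing loss iff it maximizes
the discrete Hellinger distance. -/
theorem stmt_9 {Ω : Type*} [MeasurableSpace Ω] (μ : Measure Ω) [SigmaFinite μ]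
    (p q : Ω → ℝ) (hpm : Measurable p) (hqm : Measurable q)
    (hp0 : ∀ x, 0 ≤ p x) (hq0 : ∀ x, 0 ≤ q x)
    (hpi : Integrable p μ) (hqi : Integrable q μ)
    (hp1 : ∫ x, p x ∂μ = 1) (hq1 : ∫ x, q x ∂μ = 1)
    (w₀ : Ω → ℝ) (hw₀m : Measurable w₀) (hw₀ : ∀ x, 0 < w₀ x)
    (Zp Zq : ℝ)
    (hZpi : Integrable (fun x => (w₀ x)⁻¹ * p x) μ)
    (hZqi : Integrable (fun x => w₀ x * q x) μ)
    (hZp : Zp = ∫ x, (w₀ x)⁻¹ * p x ∂μ) (hZq : Zq = ∫ x, w₀ x * q x ∂μ)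
    (hZp0 : 0 < Zp) (hZq0 : 0 < Zq)
    -- the partition T = {A₁, …, A_m₁} and its induced discrete distributions
    (m₁ : ℕ) (A₁ : Fin m₁ → Set Ω) (hA₁m : ∀ j, MeasurableSet (A₁ j))
    (hA₁disj : Pairwise fun i j => Disjoint (A₁ i) (A₁ j))
    (hA₁cov : ⋃ j, A₁ j = Set.univ)
    (a₁ b₁ : Fin m₁ → ℝ)
    (ha₁ : ∀ j, a₁ j = ∫ x in A₁ j, (w₀ x)⁻¹ * p x ∂μ)
    (hb₁ : ∀ j, b₁ j = ∫ x in A₁ j, w₀ x * q x ∂μ)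
    (ha₁0 : ∀ j, 0 < a₁ j) (hb₁0 : ∀ j, 0 < b₁ j)
    (P₁ Q₁ : Fin m₁ → ℝ)
    (hP₁ : ∀ j, P₁ j = a₁ j / Zp) (hQ₁ : ∀ j, Q₁ j = b₁ j / Zq)
    (H₁ : ℝ)
    (hH₁ : H₁ = Real.sqrt (∑ j, (Real.sqrt (P₁ j) - Real.sqrt (Q₁ j)) ^ 2) / Real.sqrt 2)
    -- a second partition T' = {A₁', …, A_m₂'} of the same kind, for the comparison claim
    (m₂ : ℕ) (A₂ : Fin m₂ → Set Ω) (hA₂m : ∀ j, MeasurableSet (A₂ j))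
    (hA₂disj : Pairwise fun i j => Disjoint (A₂ i) (A₂ j))
    (hA₂cov : ⋃ j, A₂ j = Set.univ)
    (a₂ b₂ : Fin m₂ → ℝ)
    (ha₂ : ∀ j, a₂ j = ∫ x in A₂ j, (w₀ x)⁻¹ * p x ∂μ)
    (hb₂ : ∀ j, b₂ j = ∫ x in A₂ j, w₀ x * q x ∂μ)
    (ha₂0 : ∀ j, 0 < a₂ j) (hb₂0 : ∀ j, 0 < b₂ j)
    (P₂ Q₂ : Fin m₂ → ℝ)
    (hP₂ : ∀ j, P₂ j = a₂ j / Zp) (hQ₂ : ∀ j, Q₂ j = b₂ j / Zq)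
    (H₂ : ℝ)
    (hH₂ : H₂ = Real.sqrt (∑ j, (Real.sqrt (P₂ j) - Real.sqrt (Q₂ j)) ^ 2) / Real.sqrt 2) :
    -- the partition-optimal balancing loss on T
    IsLeast
      {y : ℝ | ∃ β : Fin m₁ → ℝ,
        y = (∫ x, (w₀ x * Real.exp (∑ j, Set.indicator (A₁ j) (fun _ => β j) x))⁻¹ * p x ∂μ)
          + ∫ x, (w₀ x * Real.exp (∑ j, Set.indicator (A₁ j) (fun _ => β j) x)) * q x ∂μ}
      (2 * Real.sqrt (Zp * Zq) * ∑ j, Real.sqrt (P₁ j * Q₁ j)) ∧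
    2 * Real.sqrt (Zp * Zq) * ∑ j, Real.sqrt (P₁ j * Q₁ j)
      = 2 * Real.sqrt (Zp * Zq) * (1 - H₁ ^ 2) ∧
    -- consequently: lower partition-optimal loss ↔ larger discrete Hellinger distance
    (2 * Real.sqrt (Zp * Zq) * ∑ j, Real.sqrt (P₁ j * Q₁ j)
        ≤ 2 * Real.sqrt (Zp * Zq) * ∑ j, Real.sqrt (P₂ j * Q₂ j)
      ↔ H₂ ≤ H₁) :=
  stmt_9_general μ p q w₀ Zp Zq hZpi hZqi hZp hZq hZp0 hZq0 m₁ A₁ hA₁m hA₁disj hA₁cov a₁ b₁ ha₁ hb₁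
    ha₁0 hb₁0 P₁ Q₁ hP₁ hQ₁ H₁ hH₁ m₂ A₂ hA₂m hA₂disj hA₂cov a₂ b₂ ha₂ hb₂ ha₂0 hb₂0 P₂ Q₂ hP₂ hQ₂
    H₂ hH₂
end

section
/- Suppose w* : Ω → (0,∞) is measurable with l(w*) < ∞ and l(w*) ≤ l(w) for every measurable w : Ω → (0,∞). Then the minimizer is balanced: ∫ (w*)^{-1} p dμ = ∫ w* q dμ. -/
open MeasureTheory
open scoped ENNReal

/-!
Rescaling the minimizer by a constant `c > 0` turns the loss `A + B` into `c⁻¹ * A + c * B`.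
Since this is minimal at `c = 1`, its derivative `B - A` there vanishes; concretely, for `c > 1`
the inequality `A + B ≤ c⁻¹ * A + c * B` rearranges to `A ≤ c * B`, and `c ↓ 1` gives `A ≤ B`;
replacing `c` by `c⁻¹` gives `B ≤ A`.
-/

theorem le_of_forall_add_le_inv_mul_add_mul {α : Type*} [Field α] [LinearOrder α]
    [IsStrictOrderedRing α] {a b : α} (hb : 0 ≤ b)
    (h : ∀ c, 0 < c → a + b ≤ c⁻¹ * a + c * b) : a ≤ b := by
  refine (le_iff_forall_one_lt_le_mul₀ hb).2 fun c hc ↦ ?_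
  have hc0 : 0 < c := one_pos.trans hc
  have hcab : c * (a + b) ≤ a + c * (b * c) := by
    calc c * (a + b) ≤ c * (c⁻¹ * a + c * b) := mul_le_mul_of_nonneg_left (h c hc0) hc0.le
      _ = a + c * (b * c) := by field_simp
  have : (c - 1) * a ≤ (c - 1) * (b * c) := by linear_combination hcab
  exact le_of_mul_le_mul_left this (sub_pos.2 hc)

theorem eq_of_forall_add_le_inv_mul_add_mul {α : Type*} [Field α] [LinearOrder α]
    [IsStrictOrderedRing α] {a b : α} (ha : 0 ≤ a) (hb : 0 ≤ b)
    (h : ∀ c, 0 < c → a + b ≤ c⁻¹ * a + c * b) : a = b := by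
  refine le_antisymm (le_of_forall_add_le_inv_mul_add_mul hb h)
    (le_of_forall_add_le_inv_mul_add_mul ha fun c hc ↦ ?_)
  simpa only [inv_inv, add_comm] using h c⁻¹ (inv_pos.2 hc)

theorem ENNReal.eq_of_forall_add_le_inv_mul_add_mul {a b : ℝ≥0∞} (ha : a ≠ ∞) (hb : b ≠ ∞)
    (h : ∀ c : ℝ, 0 < c → a + b ≤ ENNReal.ofReal c⁻¹ * a + ENNReal.ofReal c * b) : a = b := by
  refine (ENNReal.toReal_eq_toReal_iff' ha hb).1
    (_root_.eq_of_forall_add_le_inv_mul_add_mul toReal_nonneg toReal_nonneg fun c hc ↦ ?_)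
  have := ENNReal.toReal_mono (by finiteness) (h c hc)
  rwa [toReal_add ha hb, toReal_add (by finiteness) (by finiteness), toReal_mul, toReal_mul,
    toReal_ofReal (inv_nonneg.2 hc.le), toReal_ofReal hc.le] at this

theorem lintegral_ofReal_const_mul {Ω : Type*} [MeasurableSpace Ω] (μ : Measure Ω) {c : ℝ}
    (hc : 0 ≤ c) (f : Ω → ℝ) :
    ∫⁻ x, ENNReal.ofReal (c * f x) ∂μ = ENNReal.ofReal c * ∫⁻ x, ENNReal.ofReal (f x) ∂μ := by
  simp_rw [ENNReal.ofReal_mul hc]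
  exact lintegral_const_mul' _ _ ENNReal.ofReal_ne_top

theorem stmt_11_general {Ω : Type*} [MeasurableSpace Ω] (μ : Measure Ω)
    (p q : Ω → ℝ)
    (wstar : Ω → ℝ) (hwm : Measurable wstar) (hw : ∀ x, 0 < wstar x)
    (hfin : (∫⁻ x, ENNReal.ofReal ((wstar x)⁻¹ * p x) ∂μ)
        + (∫⁻ x, ENNReal.ofReal (wstar x * q x) ∂μ) < ⊤)
    (hmin : ∀ w : Ω → ℝ, Measurable w → (∀ x, 0 < w x) →
      (∫⁻ x, ENNReal.ofReal ((wstar x)⁻¹ * p x) ∂μ)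
          + (∫⁻ x, ENNReal.ofReal (wstar x * q x) ∂μ)
        ≤ (∫⁻ x, ENNReal.ofReal ((w x)⁻¹ * p x) ∂μ)
          + (∫⁻ x, ENNReal.ofReal (w x * q x) ∂μ)) :
    (∫⁻ x, ENNReal.ofReal ((wstar x)⁻¹ * p x) ∂μ)
      = ∫⁻ x, ENNReal.ofReal (wstar x * q x) ∂μ := by
  obtain ⟨hA, hB⟩ := ENNReal.add_lt_top.1 hfin
  refine ENNReal.eq_of_forall_add_le_inv_mul_add_mul hA.ne hB.ne fun c hc ↦ ?_
  have hscaled := hmin (fun x ↦ c * wstar x) (hwm.const_mul c) fun x ↦ mul_pos hc (hw x)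
  simp only [mul_inv, mul_assoc] at hscaled
  rwa [lintegral_ofReal_const_mul μ (inv_nonneg.2 hc.le),
    lintegral_ofReal_const_mul μ hc.le] at hscaled

/-- Suppose `w* : Ω → (0,∞)` is measurable with `l(w*) < ∞` and
`l(w*) ≤ l(w)` for every measurable `w : Ω → (0,∞)`. Then the minimizer is balanced:
`∫ (w*)⁻¹ p dμ = ∫ w* q dμ`. -/
theorem stmt_11 {Ω : Type*} [MeasurableSpace Ω] (μ : Measure Ω) [SigmaFinite μ]
    (p q : Ω → ℝ) (hpm : Measurable p) (hqm : Measurable q)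
    (hp0 : ∀ x, 0 ≤ p x) (hq0 : ∀ x, 0 ≤ q x)
    (hp1 : ∫⁻ x, ENNReal.ofReal (p x) ∂μ = 1)
    (hq1 : ∫⁻ x, ENNReal.ofReal (q x) ∂μ = 1)
    (wstar : Ω → ℝ) (hwm : Measurable wstar) (hw : ∀ x, 0 < wstar x)
    (hfin : (∫⁻ x, ENNReal.ofReal ((wstar x)⁻¹ * p x) ∂μ)
        + (∫⁻ x, ENNReal.ofReal (wstar x * q x) ∂μ) < ⊤)
    (hmin : ∀ w : Ω → ℝ, Measurable w → (∀ x, 0 < w x) →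
      (∫⁻ x, ENNReal.ofReal ((wstar x)⁻¹ * p x) ∂μ)
          + (∫⁻ x, ENNReal.ofReal (wstar x * q x) ∂μ)
        ≤ (∫⁻ x, ENNReal.ofReal ((w x)⁻¹ * p x) ∂μ)
          + (∫⁻ x, ENNReal.ofReal (w x * q x) ∂μ)) :
    (∫⁻ x, ENNReal.ofReal ((wstar x)⁻¹ * p x) ∂μ)
      = ∫⁻ x, ENNReal.ofReal (wstar x * q x) ∂μ :=
  stmt_11_general μ p q wstar hwm hw hfin hmin
end

section
/- Let μ > 0, λ > 0, a ≥ 0, b ≥ 0, and define λ' = λ + 2a and μ' = √( λ' / (λ/μ² + 2b) ). Then ∫₀^∞ √(λ/(2πz³)) · exp( −λ(z − μ)² / (2μ²z) ) · exp( −a/z − b·z ) dz = √(λ/λ') · exp( λ/μ − λ'/μ' ). That is, the marginal (pseudo-)likelihood obtained by integrating the kernel exp(−a z^{-1} − b z) against the inverse-Gaussian(μ, λ) prior has the closed form √(λ/λ')·exp(λ/μ − λ'/μ'). -/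
/-!
Collecting exponents, the integrand is `√(l/2π) e^{l/m} z^{-3/2} e^{-αz - β/z}` with
`α = l/(2m²) + b` and `β = l'/2`. The substitution `z = β/x²` turns `∫ z^{-3/2} e^{-αz - β/z} dz`
into `(2/√β) e^{-2c} ∫₀^∞ e^{-(x - c/x)²} dx` with `c = √(αβ)`. The map `x ↦ x - c/x` is a
bijection of `(0, ∞)` onto `ℝ` with derivative `1 + c/x²`, and the inversion `x ↦ c/x` shows that
both summands contribute equally for an even integrand (Cauchy–Schlömilch), so the last integral
is half the Gaussian integral, `√π/2`.
-/

open MeasureTheory Set Real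

variable {E : Type*} [NormedAddCommGroup E] [NormedSpace ℝ E]

theorem hasDerivAt_const_div (c : ℝ) {x : ℝ} (hx : x ≠ 0) :
    HasDerivAt (fun y => c / y) (-(c / x ^ 2)) x := by
  simpa only [div_eq_mul_inv, mul_neg] using (hasDerivAt_inv hx).const_mul c

theorem integral_Ioi_comp_const_div (f : ℝ → E) {c : ℝ} (hc : 0 < c) :
    ∫ x in Ioi 0, (c / x ^ 2) • f (c / x) = ∫ x in Ioi 0, f x := by
  have hinj : InjOn (fun x => c / x) (Ioi 0) := fun x _ y _ hxy => by
    simpa [div_div_cancel₀ hc.ne'] using congrArg (c / ·) hxy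
  have himage : (fun x => c / x) '' Ioi 0 = Ioi 0 := by
    ext y
    refine ⟨fun ⟨x, hx, hxy⟩ => hxy ▸ div_pos hc hx, fun hy => ⟨c / y, div_pos hc hy, ?_⟩⟩
    exact div_div_cancel₀ hc.ne'
  have hderiv : ∀ x ∈ Ioi (0 : ℝ), HasDerivWithinAt (fun x => c / x) (-(c / x ^ 2)) (Ioi 0) x :=
    fun x hx => (hasDerivAt_const_div c (ne_of_gt hx)).hasDerivWithinAt
  conv_rhs => rw [← himage, integral_image_eq_integral_abs_deriv_smul measurableSet_Ioi hderiv hinj]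
  refine setIntegral_congr_fun measurableSet_Ioi fun x (hx : 0 < x) => ?_
  rw [abs_neg, abs_of_pos (by positivity)]

theorem integral_Ioi_comp_const_div_sq (f : ℝ → E) {c : ℝ} (hc : 0 < c) :
    ∫ x in Ioi 0, (2 * c / x ^ 3) • f (c / x ^ 2) = ∫ x in Ioi 0, f x := by
  rw [← integral_Ioi_comp_const_div f hc,
    ← integral_comp_rpow_Ioi_of_pos (g := fun x => (c / x ^ 2) • f (c / x)) two_pos]
  refine setIntegral_congr_fun measurableSet_Ioi fun x (hx : 0 < x) => ?_
  simp only [rpow_two, show (2 : ℝ) - 1 = 1 by norm_num, rpow_one, smul_smul]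
  congr 1
  field_simp

theorem hasDerivAt_sub_div (c : ℝ) {x : ℝ} (hx : x ≠ 0) :
    HasDerivAt (fun y => y - c / y) (1 + c / x ^ 2) x := by
  simpa only [sub_neg_eq_add] using (hasDerivAt_id' x).fun_sub (hasDerivAt_const_div c hx)

theorem strictMonoOn_sub_div {c : ℝ} (hc : 0 ≤ c) : StrictMonoOn (fun x => x - c / x) (Ioi 0) :=
  fun _ hx _ _ hxy => by linarith [div_le_div_of_nonneg_left hc hx hxy.le]

theorem image_sub_div_Ioi {c : ℝ} (hc : 0 < c) : (fun x => x - c / x) '' Ioi 0 = univ := by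
  refine eq_univ_of_forall fun y => ?_
  -- the positive root of `x ^ 2 - y * x - c`
  set s := √(y ^ 2 + 4 * c)
  have hs : s ^ 2 = y ^ 2 + 4 * c := sq_sqrt (by positivity)
  have hys : |y| < s := by
    rw [← sqrt_sq_eq_abs]
    exact sqrt_lt_sqrt (sq_nonneg y) (by linarith)
  have hpos : 0 < y + s := by linarith [neg_abs_le y]
  refine ⟨(y + s) / 2, half_pos hpos, ?_⟩
  field_simp
  nlinarith

theorem integral_Ioi_one_add_div_sq_smul_comp_sub_div (f : ℝ → E) {c : ℝ} (hc : 0 < c) :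
    ∫ x in Ioi 0, (1 + c / x ^ 2) • f (x - c / x) = ∫ u, f u := by
  conv_rhs => rw [← setIntegral_univ, ← image_sub_div_Ioi hc,
    integral_image_eq_integral_abs_deriv_smul measurableSet_Ioi
      (fun x hx => (hasDerivAt_sub_div c (ne_of_gt hx)).hasDerivWithinAt)
      (strictMonoOn_sub_div hc.le).injOn]
  refine setIntegral_congr_fun measurableSet_Ioi fun x _ => ?_
  rw [abs_of_pos (by positivity)]

theorem integrableOn_Ioi_one_add_div_sq_smul_comp_sub_div {f : ℝ → E}
    (hf : Integrable f) {c : ℝ} (hc : 0 < c) :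
    IntegrableOn (fun x => (1 + c / x ^ 2) • f (x - c / x)) (Ioi 0) := by
  have := (integrableOn_image_iff_integrableOn_abs_deriv_smul measurableSet_Ioi
    (fun x hx => (hasDerivAt_sub_div c (ne_of_gt hx)).hasDerivWithinAt)
    (strictMonoOn_sub_div hc.le).injOn f).mp
  rw [image_sub_div_Ioi hc, integrableOn_univ] at this
  refine (this hf).congr_fun (fun x _ => ?_) measurableSet_Ioi
  dsimp only
  rw [abs_of_pos (by positivity)]

theorem integral_Ioi_comp_sub_div {f : ℝ → E} (hf : Integrable f) (heven : f.Even) {c : ℝ}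
    (hc : 0 < c) : ∫ x in Ioi 0, f (x - c / x) = (2 : ℝ)⁻¹ • ∫ u, f u := by
  set g := fun x => f (x - c / x)
  have hsum := integrableOn_Ioi_one_add_div_sq_smul_comp_sub_div hf hc
  have hg : IntegrableOn g (Ioi 0) := by
    have hbound : ∀ x : ℝ, ‖(1 + c / x ^ 2)⁻¹‖ ≤ 1 := fun x => by
      rw [norm_inv, Real.norm_of_nonneg (by positivity)]
      exact inv_le_one_of_one_le₀ (le_add_of_nonneg_right (by positivity))
    refine IntegrableOn.congr_fun (hsum.bdd_smul 1 (φ := fun x => (1 + c / x ^ 2)⁻¹)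
      (by fun_prop : Measurable fun x : ℝ => (1 + c / x ^ 2)⁻¹).aestronglyMeasurable
      (ae_of_all _ hbound)) (fun x _ => ?_) measurableSet_Ioi
    change (1 + c / x ^ 2)⁻¹ • (1 + c / x ^ 2) • f (x - c / x) = f (x - c / x)
    rw [smul_smul, inv_mul_cancel₀ (by positivity), one_smul]
  have hinv : ∫ x in Ioi 0, (c / x ^ 2) • g x = ∫ x in Ioi 0, g x := by
    rw [← integral_Ioi_comp_const_div g hc]
    congr with x
    simp only [g, div_div_cancel₀ hc.ne', ← heven (c / x - x), neg_sub]
  have hsplit : ∫ x in Ioi 0, (c / x ^ 2) • g x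
      = ∫ x in Ioi 0, ((1 + c / x ^ 2) • f (x - c / x) - g x) := by
    simp only [add_smul, one_smul, add_sub_cancel_left, g]
  rw [hsplit, integral_sub hsum hg, integral_Ioi_one_add_div_sq_smul_comp_sub_div f hc] at hinv
  replace hinv := eq_add_of_sub_eq hinv
  rw [hinv, ← two_smul ℝ, smul_smul, inv_mul_cancel₀ two_ne_zero, one_smul]

theorem integral_Ioi_exp_neg_sq_sub_div {c : ℝ} (hc : 0 < c) :
    ∫ x in Ioi 0, exp (-(x - c / x) ^ 2) = √π / 2 := by
  have := integral_Ioi_comp_sub_div (integrable_exp_neg_mul_sq one_pos)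
    (fun u => by simp only [neg_sq]) hc
  rw [integral_gaussian, div_one] at this
  simpa [div_eq_inv_mul] using this

theorem integral_Ioi_exp_neg_mul_sub_div_div_sqrt_pow_three {α β : ℝ} (hα : 0 < α) (hβ : 0 < β) :
    ∫ z in Ioi 0, exp (-(α * z) - β / z) / √(z ^ 3) = √(π / β) * exp (-2 * √(α * β)) := by
  set c := √(α * β)
  have hc : 0 < c := by positivity
  have hc2 : c ^ 2 = α * β := sq_sqrt (by positivity)
  have hsubst : ∀ x ∈ Ioi (0 : ℝ),
      (2 * β / x ^ 3) • (exp (-(α * (β / x ^ 2)) - β / (β / x ^ 2)) / √((β / x ^ 2) ^ 3))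
        = 2 / √β * exp (-2 * c) * exp (-(x - c / x) ^ 2) := by
    intro x (hx : 0 < x)
    have hsqrt : √((β / x ^ 2) ^ 3) = β * √β / x ^ 3 := by
      rw [← sqrt_sq (by positivity : 0 ≤ β * √β / x ^ 3)]
      congr 1
      field_simp
      rw [sq_sqrt hβ.le]
    have hexp : -(α * (β / x ^ 2)) - β / (β / x ^ 2) = -2 * c + -(x - c / x) ^ 2 := by
      field_simp
      linear_combination hc2
    rw [smul_eq_mul, hsqrt, hexp, exp_add]
    field_simp
  rw [← integral_Ioi_comp_const_div_sq _ hβ, setIntegral_congr_fun measurableSet_Ioi hsubst,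
    integral_const_mul, integral_Ioi_exp_neg_sq_sub_div hc, sqrt_div' π hβ.le]
  ring

/-- Let `μ > 0`, `λ > 0`, `a ≥ 0`, `b ≥ 0`, and define `λ' = λ + 2a` and
`μ' = √(λ'/(λ/μ² + 2b))`. Then
`∫₀^∞ √(λ/(2πz³))·exp(−λ(z − μ)²/(2μ²z))·exp(−a/z − b·z) dz = √(λ/λ')·exp(λ/μ − λ'/μ')`;
that is, the marginal (pseudo-)likelihood obtained by integrating the kernel
`exp(−a z⁻¹ − b z)` against the inverse-Gaussian(μ, λ) prior has this closed form. -/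
theorem stmt_15 (m l a b : ℝ) (hm : 0 < m) (hl : 0 < l) (ha : 0 ≤ a) (hb : 0 ≤ b)
    (l' m' : ℝ) (hl' : l' = l + 2 * a) (hm' : m' = Real.sqrt (l' / (l / m ^ 2 + 2 * b))) :
    ∫ z in Set.Ioi (0 : ℝ),
        Real.sqrt (l / (2 * Real.pi * z ^ 3))
          * Real.exp (-(l * (z - m) ^ 2) / (2 * m ^ 2 * z))
          * Real.exp (-(a / z) - b * z)
      = Real.sqrt (l / l') * Real.exp (l / m - l' / m') := by
  subst hl' hm'
  set α := l / (2 * m ^ 2) + b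
  set β := (l + 2 * a) / 2
  have hα : 0 < α := by positivity
  have hβ : 0 < β := by positivity
  have hdensity : ∀ z ∈ Ioi (0 : ℝ),
      √(l / (2 * π * z ^ 3)) * exp (-(l * (z - m) ^ 2) / (2 * m ^ 2 * z)) * exp (-(a / z) - b * z)
        = √(l / (2 * π)) * exp (l / m) * (exp (-(α * z) - β / z) / √(z ^ 3)) := by
    intro z (hz : 0 < z)
    rw [← div_div, sqrt_div (by positivity), mul_assoc, ← exp_add,
      show -(l * (z - m) ^ 2) / (2 * m ^ 2 * z) + (-(a / z) - b * z)
        = l / m + (-(α * z) - β / z) by simp only [α, β]; field_simp; ring, exp_add]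
    ring
  rw [setIntegral_congr_fun measurableSet_Ioi hdensity, integral_const_mul,
    integral_Ioi_exp_neg_mul_sub_div_div_sqrt_pow_three hα hβ]
  have hconst : √(l / (2 * π)) * √(π / β) = √(l / (l + 2 * a)) := by
    rw [← sqrt_mul (by positivity)]
    congr 1
    simp only [β]
    field_simp
  have hrate : 2 * √(α * β) = (l + 2 * a) / √((l + 2 * a) / (l / m ^ 2 + 2 * b)) := by
    have hK : 0 < l / m ^ 2 + 2 * b := by positivity
    have hL : 0 < l + 2 * a := by positivity
    rw [show α * β = ((l / m ^ 2 + 2 * b) * (l + 2 * a)) / 2 ^ 2 by simp only [α, β]; field_simp,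
      sqrt_div' _ (by positivity), sqrt_sq zero_le_two, sqrt_div hL.le, sqrt_mul hK.le]
    field_simp
    rw [sq_sqrt hL.le]
  rw [sub_eq_add_neg, exp_add, ← hrate, ← hconst, neg_mul]
  ring
end
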